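/- arXiv:2409.03177 — 4 statements merged into one kernel-verified Lean document; each statement's English description precedes it below -/
import Mathlib

section
/- Let q be a real number with |q| < 1 (so that all q-integers [m]_q = (1-q^m)/(1-q) are positive). Then for all 0 ≤ k ≤ n, the Gaussian binomial coefficient satisfies binom(n,k)_q ≥ b_q⁻¹, where b_q = ∏_{i=1}^∞ (1+|q|^i)/(1-|q|^i) (a finite positive constant). -/
/-- The Gaussian binomial coefficient
`binom(n,k)_q = ∏_{i=1}^k (1 - q^{n-i+1})/(1 - q^i)`. -/
noncomputable def qbinom (q : ℝ) (n k : ℕ) : ℝ :=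
  ∏ i ∈ Finset.range k, (1 - q ^ (n - i)) / (1 - q ^ (i + 1))

/-!
With `r = |q|`, each factor of `binom(n,k)_q` is at least `(1 - r^{n-i}) / (1 + r^{i+1})`, and
after reversing the order of the numerators, `∏_{i<k} (1 - r^{n-i}) ≥ ∏_{i<k} (1 - r^{i+1})`.
Hence `binom(n,k)_q` dominates the inverse of the partial product
`∏_{i<k} (1 + r^{i+1}) / (1 - r^{i+1})`, whose factors are `≥ 1`, so it is at most `b_q`.
The infinite product converges because the logarithms of its factors are summable.
-/

open Real Finset

namespace Real

variable {ι : Type*} {f : ι → ℝ}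

theorem prod_le_tprod_of_one_le (hf : ∀ i, 1 ≤ f i) (hlog : Summable fun i ↦ log (f i))
    (s : Finset ι) : ∏ i ∈ s, f i ≤ ∏' i, f i := by
  have hpos : ∀ i, 0 < f i := fun i ↦ one_pos.trans_le (hf i)
  rw [← rexp_tsum_eq_tprod hpos hlog, ← exp_log (prod_pos fun i _ ↦ hpos i),
    log_prod fun i _ ↦ (hpos i).ne']
  exact exp_le_exp.2 (hlog.sum_le_tsum s fun i _ ↦ log_nonneg (hf i))

theorem summable_log_one_add_div_one_sub (hf : Summable f) (hf1 : ∀ i, |f i| < 1) :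
    Summable fun i ↦ log ((1 + f i) / (1 - f i)) := by
  have hsub : Summable fun i ↦ log (1 + -f i) := summable_log_one_add_of_summable hf.neg
  refine ((summable_log_one_add_of_summable hf).sub hsub).congr fun i ↦ ?_
  obtain ⟨hlo, hhi⟩ := abs_lt.1 (hf1 i)
  rw [log_div (by linarith) (by linarith), sub_eq_add_neg (1 : ℝ)]

end Real

theorem prod_one_sub_pow_le_prod_one_sub_pow_sub {r : ℝ} (hr0 : 0 ≤ r) (hr1 : r ≤ 1)
    {n k : ℕ} (hk : k ≤ n) :
    ∏ i ∈ range k, (1 - r ^ (i + 1)) ≤ ∏ i ∈ range k, (1 - r ^ (n - i)) := by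
  rw [← prod_range_reflect (fun i ↦ 1 - r ^ (n - i))]
  refine prod_le_prod (fun i _ ↦ sub_nonneg.2 (pow_le_one₀ hr0 hr1)) fun i hi ↦ ?_
  have : i + 1 ≤ n - (k - 1 - i) := by have := mem_range.1 hi; omega
  exact sub_le_sub_left (pow_le_pow_of_le_one hr0 hr1 this) 1

theorem inv_prod_le_qbinom {q : ℝ} (hq : |q| < 1) {n k : ℕ} (hk : k ≤ n) :
    (∏ i ∈ range k, (1 + |q| ^ (i + 1)) / (1 - |q| ^ (i + 1)))⁻¹ ≤ qbinom q n k := by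
  have hpow : ∀ m, |q| ^ m ≤ 1 := fun m ↦ pow_le_one₀ (abs_nonneg q) hq.le
  have hfactor : ∀ i ∈ range k,
      (1 - |q| ^ (n - i)) / (1 + |q| ^ (i + 1)) ≤ (1 - q ^ (n - i)) / (1 - q ^ (i + 1)) := by
    intro i _
    have hq_le : ∀ m, q ^ m ≤ |q| ^ m := fun m ↦ abs_pow q m ▸ le_abs_self _
    have hq_ge : ∀ m, -|q| ^ m ≤ q ^ m := fun m ↦ abs_pow q m ▸ neg_abs_le _
    refine div_le_div₀ (sub_nonneg.2 ((hq_le _).trans (hpow _))) ?_ ?_ ?_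
    · linarith [hq_le (n - i)]
    · linarith [hq_le (i + 1), pow_lt_one₀ (abs_nonneg q) hq (n := i + 1) (by omega)]
    · linarith [hq_ge (i + 1)]
  calc (∏ i ∈ range k, (1 + |q| ^ (i + 1)) / (1 - |q| ^ (i + 1)))⁻¹
      = (∏ i ∈ range k, (1 - |q| ^ (i + 1))) / ∏ i ∈ range k, (1 + |q| ^ (i + 1)) := by
        rw [prod_div_distrib, inv_div]
    _ ≤ (∏ i ∈ range k, (1 - |q| ^ (n - i))) / ∏ i ∈ range k, (1 + |q| ^ (i + 1)) := by
        refine div_le_div_of_nonneg_right ?_ (prod_nonneg fun i _ ↦ by positivity)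
        exact prod_one_sub_pow_le_prod_one_sub_pow_sub (abs_nonneg q) hq.le hk
    _ = ∏ i ∈ range k, (1 - |q| ^ (n - i)) / (1 + |q| ^ (i + 1)) := (prod_div_distrib ..).symm
    _ ≤ qbinom q n k :=
        prod_le_prod (fun i _ ↦ div_nonneg (sub_nonneg.2 (hpow _)) (by positivity)) hfactor

/-- for `|q| < 1` and `0 ≤ k ≤ n`, the constant
`b_q = ∏_{i=1}^∞ (1+|q|^i)/(1-|q|^i)` is positive (and finite), and
`binom(n,k)_q ≥ b_q⁻¹`. -/
theorem qbinom_ge_inv_bq (q : ℝ) (hq : |q| < 1) (n k : ℕ) (hk : k ≤ n) :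
    0 < ∏' i : ℕ, (1 + |q| ^ (i + 1)) / (1 - |q| ^ (i + 1)) ∧
    (∏' i : ℕ, (1 + |q| ^ (i + 1)) / (1 - |q| ^ (i + 1)))⁻¹ ≤ qbinom q n k := by
  have hpow_lt : ∀ i : ℕ, |q| ^ (i + 1) < 1 :=
    fun i ↦ pow_lt_one₀ (abs_nonneg q) hq i.succ_ne_zero
  have hone_le : ∀ i : ℕ, 1 ≤ (1 + |q| ^ (i + 1)) / (1 - |q| ^ (i + 1)) := fun i ↦ by
    rw [one_le_div (sub_pos.2 (hpow_lt i))]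
    linarith [pow_nonneg (abs_nonneg q) (i + 1)]
  have hlog : Summable fun i : ℕ ↦ log ((1 + |q| ^ (i + 1)) / (1 - |q| ^ (i + 1))) :=
    summable_log_one_add_div_one_sub
      ((summable_geometric_of_lt_one (abs_nonneg q) hq).comp_injective (add_left_injective 1))
      fun i ↦ by rw [abs_of_nonneg (pow_nonneg (abs_nonneg q) _)]; exact hpow_lt i
  have hpartial := prod_le_tprod_of_one_le hone_le hlog (range k)
  have hprod_pos : 0 < ∏ i ∈ range k, (1 + |q| ^ (i + 1)) / (1 - |q| ^ (i + 1)) :=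
    prod_pos fun i _ ↦ one_pos.trans_le (hone_le i)
  exact ⟨hprod_pos.trans_le hpartial,
    (inv_anti₀ hprod_pos hpartial).trans (inv_prod_le_qbinom hq hk)⟩
end

section
/- Let q ∈ (-1,1) and n ∈ ℕ. Then ∑_{k=0}^{n} binom(n,k)_q² ≥ b_q⁻²·(n+1), where binom(n,k)_q is the Gaussian binomial coefficient and b_q = ∏_{i=1}^∞ (1+|q|^i)/(1-|q|^i). -/
open Finset Real

lemma one_sub_div_one_add_le_one_sub_div_one_sub {a b y : ℝ} (ha : |a| ≤ y) (hb : |b| ≤ y)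
    (hy : y < 1) : (1 - y) / (1 + y) ≤ (1 - a) / (1 - b) := by
  have := le_abs_self a
  have := le_abs_self b
  have := neg_abs_le b
  exact div_le_div₀ (by linarith) (by linarith) (by linarith) (by linarith)

lemma qbinom_eq_prod_reflect (q : ℝ) {n k : ℕ} (hk : k ≤ n) :
    qbinom q n k = ∏ i ∈ range k, (1 - q ^ (n - k + 1 + i)) / (1 - q ^ (i + 1)) := by
  rw [qbinom, prod_div_distrib, prod_div_distrib,
    ← prod_range_reflect (fun i => 1 - q ^ (n - i)) k]
  congr 1
  refine prod_congr rfl fun i hi => ?_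
  rw [mem_range] at hi
  congr 2
  omega

lemma prod_one_sub_div_one_add_le_qbinom {q : ℝ} (hq : |q| < 1) {n k : ℕ} (hk : k ≤ n) :
    ∏ i ∈ range k, (1 - |q| ^ (i + 1)) / (1 + |q| ^ (i + 1)) ≤ qbinom q n k := by
  rw [qbinom_eq_prod_reflect q hk]
  refine prod_le_prod (fun i _ => ?_) fun i _ => ?_
  · have := pow_lt_one₀ (abs_nonneg q) hq i.succ_ne_zero
    positivity
  · refine one_sub_div_one_add_le_one_sub_div_one_sub ?_ (abs_pow q _).le
      (pow_lt_one₀ (abs_nonneg q) hq i.succ_ne_zero)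
    rw [abs_pow]
    exact pow_le_pow_of_le_one (abs_nonneg q) hq.le (by omega)

lemma Real.summable_log_one_add_div_one_sub_s6 {ι : Type*} {y : ι → ℝ} (hy : Summable y)
    (hy1 : ∀ i, |y i| < 1) : Summable fun i => log ((1 + y i) / (1 - y i)) := by
  refine ((summable_log_one_add_of_summable hy).sub
    (summable_log_one_add_of_summable hy.neg)).congr fun i => ?_
  have := abs_lt.mp (hy1 i)
  rw [log_div (by linarith) (by linarith), ← sub_eq_add_neg]

lemma Real.prod_le_tprod_of_one_le_s6 {ι : Type*} {f : ι → ℝ} (hf : ∀ i, 1 ≤ f i)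
    (hlog : Summable fun i => log (f i)) (s : Finset ι) : ∏ i ∈ s, f i ≤ ∏' i, f i := by
  have hpos : ∀ i, 0 < f i := fun i => one_pos.trans_le (hf i)
  calc ∏ i ∈ s, f i = rexp (∑ i ∈ s, log (f i)) := by
        rw [exp_sum]
        exact prod_congr rfl fun i _ => (exp_log (hpos i)).symm
    _ ≤ rexp (∑' i, log (f i)) :=
        exp_le_exp.mpr (hlog.sum_le_tsum s fun i _ => log_nonneg (hf i))
    _ = ∏' i, f i := rexp_tsum_eq_tprod hpos hlog

/-- for `q ∈ (-1,1)` and `n ∈ ℕ`,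
`∑_{k=0}^n binom(n,k)_q² ≥ b_q⁻² (n+1)`, where
`b_q = ∏_{i=1}^∞ (1+|q|^i)/(1-|q|^i)`. -/
theorem sum_qbinom_sq_ge (q : ℝ) (hq : |q| < 1) (n : ℕ) :
    ((∏' i : ℕ, (1 + |q| ^ (i + 1)) / (1 - |q| ^ (i + 1)))⁻¹) ^ 2 * (n + 1)
      ≤ ∑ k ∈ Finset.range (n + 1), (qbinom q n k) ^ 2 := by
  set b := ∏' i : ℕ, (1 + |q| ^ (i + 1)) / (1 - |q| ^ (i + 1))
  have hpow_lt_one (i : ℕ) : |q| ^ (i + 1) < 1 := pow_lt_one₀ (abs_nonneg q) hq i.succ_ne_zero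
  have hfactor (i : ℕ) : 1 ≤ (1 + |q| ^ (i + 1)) / (1 - |q| ^ (i + 1)) := by
    rw [one_le_div (by linarith [hpow_lt_one i])]
    linarith [pow_nonneg (abs_nonneg q) (i + 1)]
  have hlog := summable_log_one_add_div_one_sub_s6
    ((summable_geometric_of_lt_one (abs_nonneg q) hq).comp_injective (add_left_injective 1))
    fun i => by simpa [abs_pow] using hpow_lt_one i
  have hpartial := prod_le_tprod_of_one_le_s6 hfactor hlog
  have hb : 1 ≤ b := by simpa using hpartial ∅
  have hkey (k : ℕ) (hk : k ≤ n) : b⁻¹ ≤ qbinom q n k := calc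
    b⁻¹ ≤ (∏ i ∈ range k, (1 + |q| ^ (i + 1)) / (1 - |q| ^ (i + 1)))⁻¹ :=
        inv_anti₀ (prod_pos fun i _ => one_pos.trans_le (hfactor i)) (hpartial _)
    _ = ∏ i ∈ range k, (1 - |q| ^ (i + 1)) / (1 + |q| ^ (i + 1)) := by
        simp only [← prod_inv_distrib, inv_div]
    _ ≤ qbinom q n k := prod_one_sub_div_one_add_le_qbinom hq hk
  calc b⁻¹ ^ 2 * (n + 1) = ∑ _k ∈ range (n + 1), b⁻¹ ^ 2 := by simp [mul_comm]
    _ ≤ ∑ k ∈ range (n + 1), qbinom q n k ^ 2 := sum_le_sum fun k hk =>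
        pow_le_pow_left₀ (inv_nonneg.mpr (zero_le_one.trans hb))
          (hkey k (Nat.lt_succ_iff.mp (mem_range.mp hk))) 2
end

section
/- Let V be a finite-dimensional complex inner product space, let P and Q be positive (positive semidefinite, with P strictly positive) operators on V, let R be an operator on V with Q = P R*, and suppose Q ≤ C·P for some constant C > 0. Then for every ξ ∈ V, the P-seminorm of R*ξ satisfies ⟨P R*ξ, R*ξ⟩^{1/2} ≤ C^{1/2} ⟨Qξ, ξ⟩^{1/2}. -/
/-- Cauchy–Schwarz for the semi-inner-product induced by a symmetric positive
semidefinite operator `T`. -/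
lemma cs_symm_op {V : Type*} [NormedAddCommGroup V] [InnerProductSpace ℂ V]
    (T : V →ₗ[ℂ] V) (hT : T.IsSymmetric) (hpos : ∀ x : V, 0 ≤ (inner ℂ (T x) x : ℂ).re)
    (x y : V) :
    ‖(inner ℂ (T x) y : ℂ)‖ * ‖(inner ℂ (T y) x : ℂ)‖
      ≤ (inner ℂ (T x) x : ℂ).re * (inner ℂ (T y) y : ℂ).re := by
  let c : PreInnerProductSpace.Core ℂ V :=
    { inner := fun a b => inner ℂ (T a) b
      conj_inner_symm := fun a b => by
        show (starRingEnd ℂ) (inner ℂ (T b) a) = inner ℂ (T a) b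
        rw [hT a b]; exact inner_conj_symm a (T b)
      re_inner_nonneg := hpos
      add_left := fun a b z => by simp [inner_add_left]
      smul_left := fun a b r => by simp [inner_smul_left, mul_comm] }
  exact @InnerProductSpace.Core.inner_mul_inner_self_le ℂ V _ _ _ c x y

/-- Let `V` be a finite-dimensional complex inner product space,
`P, Q` positive (self-adjoint, positive semidefinite) operators on `V` with `P`
strictly positive, and `R*` an operator with `Q = P ∘ R*` and `Q ≤ C·P` for
some `C > 0`.  Then for every `ξ ∈ V`,
`⟨P R*ξ, R*ξ⟩^{1/2} ≤ C^{1/2} ⟨Qξ, ξ⟩^{1/2}`. -/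
theorem Pseminorm_Rstar_le {V : Type*} [NormedAddCommGroup V]
    [InnerProductSpace ℂ V] [FiniteDimensional ℂ V]
    (P Q Rstar : V →ₗ[ℂ] V) (C : ℝ) (hC : 0 < C)
    (hPsymm : P.IsSymmetric) (hQsymm : Q.IsSymmetric)
    (hPpos : ∀ ξ : V, 0 ≤ (inner ℂ (P ξ) ξ : ℂ).re)
    (hPstrict : ∀ ξ : V, ξ ≠ 0 → 0 < (inner ℂ (P ξ) ξ : ℂ).re)
    (hQpos : ∀ ξ : V, 0 ≤ (inner ℂ (Q ξ) ξ : ℂ).re)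
    (hQR : Q = P ∘ₗ Rstar)
    (hQleCP : ∀ ξ : V, (inner ℂ (Q ξ) ξ : ℂ).re ≤ C * (inner ℂ (P ξ) ξ : ℂ).re) :
    ∀ ξ : V, Real.sqrt ((inner ℂ (P (Rstar ξ)) (Rstar ξ) : ℂ).re)
      ≤ Real.sqrt C * Real.sqrt ((inner ℂ (Q ξ) ξ : ℂ).re) := by
  intro ξ
  set x := Rstar ξ with hx
  have hPQ : P x = Q ξ := by rw [hQR]; rfl
  set a : ℝ := (inner ℂ (P x) x : ℂ).re with ha
  set q : ℝ := (inner ℂ (Q ξ) ξ : ℂ).re with hq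
  have ha0 : 0 ≤ a := hPpos x
  have hq0 : 0 ≤ q := hQpos ξ
  -- key inequality : a ≤ C * q
  have key : a ≤ C * q := by
    rcases eq_or_lt_of_le ha0 with h0 | h0
    · rw [← h0]; positivity
    · -- a = re ⟨Q ξ, x⟩
      have haz : a = (inner ℂ (Q ξ) x : ℂ).re := by rw [ha, hPQ]
      have hnorm : a ≤ ‖(inner ℂ (Q ξ) x : ℂ)‖ := haz ▸ Complex.re_le_norm _
      have hcs := cs_symm_op Q hQsymm hQpos ξ x
      have hQxx : (inner ℂ (Q x) x : ℂ).re ≤ C * a := hQleCP x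
      have hconj : ‖(inner ℂ (Q x) ξ : ℂ)‖ = ‖(inner ℂ (Q ξ) x : ℂ)‖ := by
        have he : (inner ℂ (Q x) ξ : ℂ) = (starRingEnd ℂ) (inner ℂ (Q ξ) x) := by
          rw [hQsymm ξ x]; exact (inner_conj_symm (𝕜 := ℂ) (Q x) ξ).symm
        rw [he, RCLike.norm_conj]
      rw [hconj] at hcs
      have h1 : a * a ≤ q * (C * a) := by
        calc a * a ≤ ‖(inner ℂ (Q ξ) x : ℂ)‖ * ‖(inner ℂ (Q ξ) x : ℂ)‖ :=
              mul_le_mul hnorm hnorm ha0 (norm_nonneg _)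
          _ ≤ q * (inner ℂ (Q x) x : ℂ).re := hcs
          _ ≤ q * (C * a) := by
              exact mul_le_mul_of_nonneg_left hQxx hq0
      nlinarith [h0]
  calc Real.sqrt a ≤ Real.sqrt (C * q) := Real.sqrt_le_sqrt key
    _ = Real.sqrt C * Real.sqrt q := Real.sqrt_mul hC.le q
end

section
/- Let V be a finite-dimensional complex inner product space with positive operators P, Q satisfying Q = P R* and Q ≤ C·P for an operator R and constant C ≥ 1. Then ⟨Q R*ξ, R*ξ⟩ ≤ C² ⟨Qξ, ξ⟩ for all ξ ∈ V; that is, R* is bounded by C in the Q-seminorm. -/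
/-!
Since `P R* = Q`, the hypothesis `Q ≤ C P` evaluated at `R*ξ` reads
`⟨Q R*ξ, R*ξ⟩ ≤ C re ⟨Qξ, R*ξ⟩`; that is, `‖R*ξ‖_Q² ≤ C ⟨ξ, R*ξ⟩_Q` for the semi-inner product
`⟨x, y⟩_Q = re ⟨Qx, y⟩`. Cauchy–Schwarz for this positive semidefinite form bounds the right-hand
side by `C ‖ξ‖_Q ‖R*ξ‖_Q`, and dividing by `‖R*ξ‖_Q` gives `‖R*ξ‖_Q ≤ C ‖ξ‖_Q`.
-/

open RCLike

namespace LinearMap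

variable {𝕜 E : Type*} [RCLike 𝕜] [NormedAddCommGroup E] [InnerProductSpace 𝕜 E]
  [Module ℝ E] [IsScalarTower ℝ 𝕜 E]

def reInnerForm (T : E →ₗ[𝕜] E) : LinearMap.BilinForm ℝ E :=
  LinearMap.mk₂ ℝ (fun x y => re (inner 𝕜 (T x) y))
    (fun x₁ x₂ y => by simp only [map_add, inner_add_left])
    (fun c x y => by
      rw [real_smul_eq_coe_smul (K := 𝕜), map_smul, inner_smul_real_left, smul_re, smul_eq_mul])
    (fun x y₁ y₂ => by simp only [inner_add_right, map_add])
    (fun c x y => by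
      rw [real_smul_eq_coe_smul (K := 𝕜), inner_smul_real_right, smul_re, smul_eq_mul])

@[simp]
theorem reInnerForm_apply (T : E →ₗ[𝕜] E) (x y : E) :
    T.reInnerForm x y = re (inner 𝕜 (T x) y) := rfl

theorem IsSymmetric.isSymm_reInnerForm {T : E →ₗ[𝕜] E} (hT : T.IsSymmetric) :
    IsSymm T.reInnerForm := by
  refine ⟨fun x y => ?_⟩
  simp only [reInnerForm_apply, RingHom.id_apply, hT x y, inner_re_symm (𝕜 := 𝕜) x (T y)]

theorem IsPositive.re_inner_sq_le {T : E →ₗ[𝕜] E} (hT : T.IsPositive) (x y : E) :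
    re (inner 𝕜 (T x) y) ^ 2 ≤ re (inner 𝕜 (T x) x) * re (inner 𝕜 (T y) y) :=
  T.reInnerForm.apply_sq_le_of_symm hT.re_inner_nonneg_left hT.isSymmetric.isSymm_reInnerForm x y

theorem IsPositive.re_inner_self_le_sq_mul_of_le_mul {T : E →ₗ[𝕜] E} (hT : T.IsPositive)
    {x y : E} {C : ℝ} (h : re (inner 𝕜 (T y) y) ≤ C * re (inner 𝕜 (T x) y)) :
    re (inner 𝕜 (T y) y) ≤ C ^ 2 * re (inner 𝕜 (T x) x) := by
  set a := re (inner 𝕜 (T y) y)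
  set r := re (inner 𝕜 (T x) y)
  set b := re (inner 𝕜 (T x) x)
  have hb : 0 ≤ b := hT.re_inner_nonneg_left x
  have ha : 0 ≤ a := hT.re_inner_nonneg_left y
  rcases ha.eq_or_lt with ha_zero | ha_pos
  · rw [← ha_zero]
    positivity
  · refine le_of_mul_le_mul_right ?_ ha_pos
    calc a * a ≤ (C * r) * (C * r) := mul_self_le_mul_self ha h
      _ = C ^ 2 * r ^ 2 := by ring
      _ ≤ C ^ 2 * (b * a) := by gcongr; exact hT.re_inner_sq_le x y
      _ = C ^ 2 * b * a := by ring

end LinearMap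

theorem Qseminorm_Rstar_le_general {V : Type*} [NormedAddCommGroup V]
    [InnerProductSpace ℂ V]
    (P Q Rstar : V →ₗ[ℂ] V) (C : ℝ)
    (hQsymm : Q.IsSymmetric)
    (hQpos : ∀ ξ : V, 0 ≤ (inner ℂ (Q ξ) ξ : ℂ).re)
    (hQR : Q = P ∘ₗ Rstar)
    (hQleCP : ∀ ξ : V, (inner ℂ (Q ξ) ξ : ℂ).re ≤ C * (inner ℂ (P ξ) ξ : ℂ).re) :
    ∀ ξ : V, (inner ℂ (Q (Rstar ξ)) (Rstar ξ) : ℂ).re ≤ C ^ 2 * (inner ℂ (Q ξ) ξ : ℂ).re := by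
  intro ξ
  have hPR : P (Rstar ξ) = Q ξ := by rw [hQR, LinearMap.comp_apply]
  have hQ : Q.IsPositive := ⟨hQsymm, hQpos⟩
  exact hQ.re_inner_self_le_sq_mul_of_le_mul (hPR ▸ hQleCP (Rstar ξ))

/-- Let `V` be a finite-dimensional complex inner product space,
`P, Q` positive operators with `Q = P ∘ R*` and `Q ≤ C·P` for an operator `R*`
and a constant `C ≥ 1`.  Then `⟨Q R*ξ, R*ξ⟩ ≤ C² ⟨Qξ, ξ⟩` for all `ξ ∈ V`,
i.e. `R*` is bounded by `C` in the `Q`-seminorm. -/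
theorem Qseminorm_Rstar_le {V : Type*} [NormedAddCommGroup V]
    [InnerProductSpace ℂ V] [FiniteDimensional ℂ V]
    (P Q Rstar : V →ₗ[ℂ] V) (C : ℝ) (hC : 1 ≤ C)
    (hPsymm : P.IsSymmetric) (hQsymm : Q.IsSymmetric)
    (hPpos : ∀ ξ : V, 0 ≤ (inner ℂ (P ξ) ξ : ℂ).re)
    (hQpos : ∀ ξ : V, 0 ≤ (inner ℂ (Q ξ) ξ : ℂ).re)
    (hQR : Q = P ∘ₗ Rstar)
    (hQleCP : ∀ ξ : V, (inner ℂ (Q ξ) ξ : ℂ).re ≤ C * (inner ℂ (P ξ) ξ : ℂ).re) :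
    ∀ ξ : V, (inner ℂ (Q (Rstar ξ)) (Rstar ξ) : ℂ).re ≤ C ^ 2 * (inner ℂ (Q ξ) ξ : ℂ).re :=
  Qseminorm_Rstar_le_general P Q Rstar C hQsymm hQpos hQR hQleCP
end
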